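/- arXiv:1909.01635 — 7 statements merged into one kernel-verified Lean document; each statement's English description precedes it below -/
import Mathlib

section
/- Let V be a real Hilbert space, let Ψ : V → ℝ be convex and Fréchet differentiable with gradient A : V → V (i.e. ⟪A(w), z⟫ equals the Fréchet derivative of Ψ at w applied to z), and assume A is strongly monotone with constant m > 0. Let j : V → ℝ be nonnegative, convex, positively homogeneous and lower semicontinuous. Then, for every given previous state w_prev ∈ V and every load ℓ ∈ V, there exists a unique increment Δw ∈ V satisfying the update variational inequality ⟪A(w_prev + Δw), z − Δw⟫ + j(z) − j(Δw) ≥ ⟪ℓ, z − Δw⟫ for all z ∈ V. -/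
open scoped RealInnerProductSpace
open Filter Set

private lemma aux_le_slope {g : ℝ → ℝ} {g' c : ℝ} (hg : HasDerivAt g g' 0)
    (h : ∀ t : ℝ, t ∈ Set.Ioc (0:ℝ) 1 → c * t ≤ g t - g 0) : c ≤ g' := by
  have h1 : Filter.Tendsto (slope g 0) (nhdsWithin 0 (Set.Ioi 0)) (nhds g') :=
    (hasDerivAt_iff_tendsto_slope.mp hg).mono_left
      (nhdsWithin_mono _ fun t ht => ne_of_gt ht)
  refine ge_of_tendsto h1 ?_
  have hmem : Set.Ioc (0:ℝ) 1 ∈ nhdsWithin (0:ℝ) (Set.Ioi 0) :=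
    Ioc_mem_nhdsGT_of_mem (by constructor <;> norm_num)
  filter_upwards [hmem] with t ht
  rw [slope_def_field, sub_zero, le_div_iff₀ ht.1]
  exact h t ht

private lemma aux_slope_le {g : ℝ → ℝ} {g' c : ℝ} (hg : HasDerivAt g g' 0)
    (h : ∀ t : ℝ, t ∈ Set.Ioc (0:ℝ) 1 → g t - g 0 ≤ c * t) : g' ≤ c := by
  have h1 : Filter.Tendsto (slope g 0) (nhdsWithin 0 (Set.Ioi 0)) (nhds g') :=
    (hasDerivAt_iff_tendsto_slope.mp hg).mono_left
      (nhdsWithin_mono _ fun t ht => ne_of_gt ht)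
  refine le_of_tendsto h1 ?_
  have hmem : Set.Ioc (0:ℝ) 1 ∈ nhdsWithin (0:ℝ) (Set.Ioi 0) :=
    Ioc_mem_nhdsGT_of_mem (by constructor <;> norm_num)
  filter_upwards [hmem] with t ht
  rw [slope_def_field, sub_zero, div_le_iff₀ ht.1]
  exact h t ht

/-- Existence and uniqueness of the increment solving the time-discrete update
variational inequality. -/
theorem update_VI_existence_uniqueness
    {V : Type*} [NormedAddCommGroup V] [InnerProductSpace ℝ V] [CompleteSpace V]
    (Ψ : V → ℝ) (A : V → V) (m : ℝ) (hm : 0 < m)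
    (hΨconv : ConvexOn ℝ Set.univ Ψ)
    (hgrad : ∀ w : V, HasGradientAt Ψ (A w) w)
    (hmono : ∀ w₁ w₂ : V, m * ‖w₁ - w₂‖ ^ 2 ≤ ⟪A w₁ - A w₂, w₁ - w₂⟫)
    (j : V → ℝ)
    (hjnonneg : ∀ z : V, 0 ≤ j z)
    (hjconv : ConvexOn ℝ Set.univ j)
    (hjhom : ∀ α : ℝ, 0 < α → ∀ z : V, j (α • z) = α * j z)
    (hjlsc : LowerSemicontinuous j)
    (wprev ℓ : V) :
    ∃! Δw : V, ∀ z : V,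
      ⟪ℓ, z - Δw⟫ ≤ ⟪A (wprev + Δw), z - Δw⟫ + j z - j Δw := by
  -- directional derivative of Ψ along a line
  have hdir : ∀ x d : V, HasDerivAt (fun t : ℝ => Ψ (x + t • d)) ⟪A x, d⟫ 0 := by
    intro x d
    have h2 : HasDerivAt (fun t : ℝ => x + t • d) d 0 := by
      simpa using ((hasDerivAt_id (0:ℝ)).smul_const d).const_add x
    have h1 : HasFDerivAt Ψ (InnerProductSpace.toDual ℝ V (A x)) ((fun t : ℝ => x + t • d) 0) := by
      simpa using (hgrad x).hasFDerivAt
    have h3 := h1.comp_hasDerivAt 0 h2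
    exact h3
  -- gradient inequality from convexity
  have hgi : ∀ x y : V, Ψ x + ⟪A x, y - x⟫ ≤ Ψ y := by
    intro x y
    have key : ⟪A x, y - x⟫ ≤ Ψ y - Ψ x := by
      refine aux_slope_le (hdir x (y - x)) ?_
      intro t ht
      have hco : x + t • (y - x) = (1 - t) • x + t • y := by
        rw [smul_sub, sub_smul, one_smul]; abel
      have := hΨconv.2 (Set.mem_univ x) (Set.mem_univ y) (by linarith [ht.2] : (0:ℝ) ≤ 1 - t)
        (le_of_lt ht.1) (by ring)
      rw [← hco] at this
      simp only [smul_eq_mul] at this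
      simp only [zero_smul, add_zero]
      linarith
    linarith
  -- strong convexity inequality (with constant m/4, enough for our purposes)
  have hSC : ∀ x y : V, Ψ x + ⟪A x, y - x⟫ + m / 4 * ‖y - x‖ ^ 2 ≤ Ψ y := by
    intro x y
    set w := x + (2⁻¹ : ℝ) • (y - x) with hw
    have hwx : w - x = (2⁻¹ : ℝ) • (y - x) := by rw [hw]; module
    have eyw : y - w = w - x := by rw [hw]; module
    have h1 := hgi x w
    have h2 := hgi w y
    rw [eyw] at h2
    have e1 : ⟪A w, w - x⟫ = ⟪A x, w - x⟫ + ⟪A w - A x, w - x⟫ := by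
      rw [inner_sub_left]; ring
    have esum : ⟪A x, y - x⟫ = ⟪A x, w - x⟫ + ⟪A x, w - x⟫ := by
      rw [← inner_add_right]; congr 1; module
    have e6 : ‖w - x‖ = 2⁻¹ * ‖y - x‖ := by
      rw [hwx, norm_smul]; simp
    have e7 : ‖y - x‖ ^ 2 = 4 * ‖w - x‖ ^ 2 := by rw [e6]; ring
    have hmono' := hmono w x
    rw [e7]
    linarith
  -- the energy functional
  set F : V → ℝ := fun u => Ψ (wprev + u) + j u - ⟪ℓ, u⟫ with hF
  -- midpoint strong convexity of F
  have hFmid : ∀ u v : V, F (u + (2⁻¹ : ℝ) • (v - u)) ≤ (F u + F v) / 2 - m / 16 * ‖v - u‖ ^ 2 := by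
    intro u v
    set c := u + (2⁻¹ : ℝ) • (v - u) with hc
    have h1 := hSC (wprev + c) (wprev + u)
    have h2 := hSC (wprev + c) (wprev + v)
    have eu : wprev + u - (wprev + c) = -((2⁻¹ : ℝ) • (v - u)) := by rw [hc]; module
    have ev : wprev + v - (wprev + c) = (2⁻¹ : ℝ) • (v - u) := by rw [hc]; module
    rw [eu] at h1; rw [ev] at h2
    have einner : ⟪A (wprev + c), -((2⁻¹ : ℝ) • (v - u))⟫ = -⟪A (wprev + c), (2⁻¹ : ℝ) • (v - u)⟫ :=
      inner_neg_right _ _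
    have enorm : ‖-((2⁻¹ : ℝ) • (v - u))‖ ^ 2 = 4⁻¹ * ‖v - u‖ ^ 2 := by
      rw [norm_neg, norm_smul]; simp; ring
    have enorm2 : ‖(2⁻¹ : ℝ) • (v - u)‖ ^ 2 = 4⁻¹ * ‖v - u‖ ^ 2 := by
      rw [norm_smul]; simp; ring
    have hjc : j c ≤ (2⁻¹ : ℝ) * j u + (2⁻¹ : ℝ) * j v := by
      have hco : c = (2⁻¹ : ℝ) • u + (2⁻¹ : ℝ) • v := by
        rw [hc]; module
      have := hjconv.2 (Set.mem_univ u) (Set.mem_univ v) (by norm_num : (0:ℝ) ≤ 2⁻¹)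
        (by norm_num : (0:ℝ) ≤ 2⁻¹) (by norm_num)
      rw [← hco] at this
      simpa using this
    have hlc : ⟪ℓ, c⟫ = ⟪ℓ, u⟫ + 2⁻¹ * ⟪ℓ, v⟫ - 2⁻¹ * ⟪ℓ, u⟫ := by
      rw [hc, inner_add_right, real_inner_smul_right, inner_sub_right]; ring
    simp only [hF]
    rw [einner, enorm] at h1
    rw [enorm2] at h2
    linarith
  -- lower bound for F
  have hFlb : ∀ u : V, Ψ wprev - ‖A wprev - ℓ‖ ^ 2 / m ≤ F u := by
    intro u
    have h1 := hSC wprev (wprev + u)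
    rw [add_sub_cancel_left] at h1
    have h2 : -(‖A wprev - ℓ‖ * ‖u‖) ≤ ⟪A wprev - ℓ, u⟫ :=
      neg_le_of_abs_le (abs_real_inner_le_norm _ _)
    have h3 : ⟪A wprev - ℓ, u⟫ = ⟪A wprev, u⟫ - ⟪ℓ, u⟫ := inner_sub_left _ _ _
    have h4 : 0 ≤ j u := hjnonneg u
    have hkey : ‖A wprev - ℓ‖ ^ 2 = m * (‖A wprev - ℓ‖ ^ 2 / m) := by
      field_simp
    have h5 : -(‖A wprev - ℓ‖ ^ 2 / m) ≤ m / 4 * ‖u‖ ^ 2 - ‖A wprev - ℓ‖ * ‖u‖ := by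
      nlinarith [sq_nonneg (m * ‖u‖ - 2 * ‖A wprev - ℓ‖), hm, hkey]
    simp only [hF]
    linarith
  -- infimum of F
  have hbdd : BddBelow (Set.range F) := ⟨Ψ wprev - ‖A wprev - ℓ‖ ^ 2 / m, by
    rintro _ ⟨u, rfl⟩; exact hFlb u⟩
  set I : ℝ := ⨅ u, F u with hI
  have hI_le : ∀ u, I ≤ F u := fun u => ciInf_le hbdd u
  -- minimizing sequence
  have hseq : ∀ n : ℕ, ∃ u : V, F u < I + 1 / (n + 1) := by
    intro n
    refine exists_lt_of_ciInf_lt ?_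
    rw [← hI]
    have : (0:ℝ) < 1 / (n + 1) := by positivity
    linarith
  choose x hx using hseq
  -- quantitative Cauchy estimate
  have hkey : ∀ n k : ℕ, m / 16 * ‖x k - x n‖ ^ 2 ≤ (1 / (n + 1) + 1 / (k + 1)) / 2 := by
    intro n k
    have h1 := hFmid (x n) (x k)
    have h2 := hI_le (x n + (2⁻¹ : ℝ) • (x k - x n))
    have h3 := hx n
    have h4 := hx k
    linarith
  have hcauchy : CauchySeq x := by
    rw [Metric.cauchySeq_iff']
    intro ε hε
    obtain ⟨N, hN⟩ := exists_nat_gt (16 / (m * ε ^ 2))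
    refine ⟨N, fun n hn => ?_⟩
    have hNpos : (0:ℝ) < (N:ℝ) + 1 := by positivity
    have hfrac : 1 / ((N:ℝ) + 1) < m * ε ^ 2 / 16 := by
      have hms : (0:ℝ) < m * ε ^ 2 := by positivity
      have h16 : (16:ℝ) < N * (m * ε ^ 2) := (div_lt_iff₀ hms).mp hN
      rw [div_lt_div_iff₀ hNpos (by norm_num : (0:ℝ) < 16)]
      nlinarith [hms]
    have hfrac2 : 1 / ((n:ℝ) + 1) ≤ 1 / ((N:ℝ) + 1) := by
      apply one_div_le_one_div_of_le hNpos
      have : (N:ℝ) ≤ (n:ℝ) := by exact_mod_cast hn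
      linarith
    have hk := hkey N n
    have hsq : ‖x n - x N‖ ^ 2 < ε ^ 2 := by
      have h16 : m / 16 * ‖x n - x N‖ ^ 2 < m / 16 * ε ^ 2 := by
        calc m / 16 * ‖x n - x N‖ ^ 2 ≤ (1 / ((N:ℝ) + 1) + 1 / ((n:ℝ) + 1)) / 2 := hk
          _ ≤ 1 / ((N:ℝ) + 1) := by linarith
          _ < m * ε ^ 2 / 16 := hfrac
          _ = m / 16 * ε ^ 2 := by ring
      have hm16 : (0:ℝ) < m / 16 := by positivity
      exact lt_of_mul_lt_mul_left h16 hm16.le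
    have := lt_of_pow_lt_pow_left₀ 2 hε.le (by simpa [abs_of_nonneg (norm_nonneg _)] using hsq)
    rw [dist_eq_norm]
    simpa using this
  obtain ⟨u, hu⟩ := cauchySeq_tendsto_of_complete hcauchy
  -- Ψ is continuous
  have hΨcont : Continuous Ψ := by
    rw [continuous_iff_continuousAt]
    intro w
    exact (hgrad w).hasFDerivAt.continuousAt
  -- the limit is a minimizer
  have hFu : F u ≤ I := by
    by_contra hlt
    push_neg at hlt
    set ε := (F u - I) / 3 with hε
    have hεpos : 0 < ε := by rw [hε]; exact div_pos (by linarith) (by norm_num)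
    have hεeq : F u = I + 3 * ε := by rw [hε]; ring
    have hc1 : Filter.Tendsto (fun n => Ψ (wprev + x n) - ⟪ℓ, x n⟫) Filter.atTop
        (nhds (Ψ (wprev + u) - ⟪ℓ, u⟫)) := by
      have ht1 : Filter.Tendsto (fun n => wprev + x n) Filter.atTop (nhds (wprev + u)) :=
        tendsto_const_nhds.add hu
      exact ((hΨcont.tendsto _).comp ht1).sub (Filter.Tendsto.inner tendsto_const_nhds hu)
    have hev1 : ∀ᶠ n in Filter.atTop,
        Ψ (wprev + u) - ⟪ℓ, u⟫ - ε < Ψ (wprev + x n) - ⟪ℓ, x n⟫ :=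
      hc1.eventually (eventually_gt_nhds (by linarith))
    have hev2 : ∀ᶠ n in Filter.atTop, j u - ε < j (x n) :=
      hu.eventually (hjlsc u (j u - ε) (by linarith))
    have hev3 : ∀ᶠ n in Filter.atTop, F (x n) < I + ε := by
      have htend : Filter.Tendsto (fun n : ℕ => 1 / ((n:ℝ) + 1)) Filter.atTop (nhds 0) :=
        tendsto_one_div_add_atTop_nhds_zero_nat
      filter_upwards [htend.eventually (eventually_lt_nhds hεpos)] with n hn
      exact (hx n).trans_le (by linarith)
    obtain ⟨n, h1, h2, h3⟩ := (hev1.and (hev2.and hev3)).exists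
    have hFn : F (x n) = Ψ (wprev + x n) + j (x n) - ⟪ℓ, x n⟫ := rfl
    have hFu' : F u = Ψ (wprev + u) + j u - ⟪ℓ, u⟫ := rfl
    have : I + ε < F (x n) := by
      rw [hFn]
      rw [hFu'] at hεeq
      linarith
    linarith
  have hmin : ∀ v : V, F u ≤ F v := fun v => hFu.trans (hI_le v)
  -- the variational inequality at the minimizer
  have hVI : ∀ z : V, ⟪ℓ, z - u⟫ ≤ ⟪A (wprev + u), z - u⟫ + j z - j u := by
    intro z
    set d := z - u with hd
    have hder := hdir (wprev + u) d
    have hle : ⟪ℓ, d⟫ - j z + j u ≤ ⟪A (wprev + u), d⟫ := by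
      refine aux_le_slope hder ?_
      intro t ht
      have ht0 := ht.1
      have hassoc : wprev + u + t • d = wprev + (u + t • d) := by module
      have hmin' := hmin (u + t • d)
      have hjt : j (u + t • d) ≤ (1 - t) * j u + t * j z := by
        have hco : u + t • d = (1 - t) • u + t • z := by rw [hd]; module
        have := hjconv.2 (Set.mem_univ u) (Set.mem_univ z) (by linarith [ht.2] : (0:ℝ) ≤ 1 - t)
          ht0.le (by ring)
        rw [← hco] at this
        simpa using this
      have hlin : ⟪ℓ, u + t • d⟫ = ⟪ℓ, u⟫ + t * ⟪ℓ, d⟫ := by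
        rw [inner_add_right, real_inner_smul_right]
      have hFud : F (u + t • d) = Ψ (wprev + (u + t • d)) + j (u + t • d) - ⟪ℓ, u + t • d⟫ := rfl
      have hFu0 : F u = Ψ (wprev + u) + j u - ⟪ℓ, u⟫ := rfl
      simp only [hassoc, zero_smul, add_zero]
      rw [hFud, hFu0] at hmin'
      linarith
    rw [hd] at hle
    linarith
  refine ⟨u, hVI, ?_⟩
  -- uniqueness
  intro v hv
  have h1 := hv u
  have h2 := hVI v
  have e1 : ⟪ℓ, u - v⟫ = -⟪ℓ, v - u⟫ := by
    rw [← inner_neg_right]; congr 1; module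
  have e2 : ⟪A (wprev + v), u - v⟫ = -⟪A (wprev + v), v - u⟫ := by
    rw [← inner_neg_right]; congr 1; module
  have hmono' := hmono (wprev + u) (wprev + v)
  have e3 : wprev + u - (wprev + v) = u - v := by module
  rw [e3] at hmono'
  have e4 : ⟪A (wprev + u) - A (wprev + v), u - v⟫
      = ⟪A (wprev + u), u - v⟫ - ⟪A (wprev + v), u - v⟫ := inner_sub_left _ _ _
  have e5 : ⟪A (wprev + u), v - u⟫ = -⟪A (wprev + u), u - v⟫ := by
    rw [← inner_neg_right]; congr 1; module
  have hsq : m * ‖u - v‖ ^ 2 ≤ 0 := by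
    rw [e1] at h1
    rw [e5] at h2
    rw [e4] at hmono'
    rw [e2] at h1
    linarith
  have hnorm : ‖u - v‖ ^ 2 ≤ 0 := by nlinarith
  have : ‖u - v‖ = 0 := by nlinarith [norm_nonneg (u - v)]
  have := norm_eq_zero.mp this
  have := sub_eq_zero.mp this
  exact this.symm
end

section
/- Let V be a real Hilbert space, A : V → V strongly monotone with constant m > 0, and j : V → ℝ nonnegative, convex and positively homogeneous. Suppose Δw_{n-1} ∈ V solves the update variational inequality for data (w_{n-2}, ℓ_{n-1}) and Δw_n ∈ V solves the update variational inequality for data (w_{n-1}, ℓ_n), where w_{n-1} = w_{n-2} + Δw_{n-1}. Then m‖Δw_n‖² ≤ ⟪ℓ_n − ℓ_{n-1}, Δw_n⟫, and in particular ‖Δw_n‖ ≤ (1/m)‖ℓ_n − ℓ_{n-1}‖. -/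
open scoped RealInnerProductSpace

/-- Stability estimate for consecutive solutions of the time-discrete update
variational inequalities. -/
theorem update_VI_stability
    {V : Type*} [NormedAddCommGroup V] [InnerProductSpace ℝ V] [CompleteSpace V]
    (A : V → V) (m : ℝ) (hm : 0 < m)
    (hmono : ∀ w₁ w₂ : V, m * ‖w₁ - w₂‖ ^ 2 ≤ ⟪A w₁ - A w₂, w₁ - w₂⟫)
    (j : V → ℝ)
    (hjnonneg : ∀ z : V, 0 ≤ j z)
    (hjconv : ConvexOn ℝ Set.univ j)
    (hjhom : ∀ α : ℝ, 0 < α → ∀ z : V, j (α • z) = α * j z)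
    (wnm2 wnm1 Δwnm1 Δwn ℓnm1 ℓn : V)
    (hw : wnm1 = wnm2 + Δwnm1)
    (hprev : ∀ z : V, ⟪ℓnm1, z - Δwnm1⟫ ≤ ⟪A (wnm2 + Δwnm1), z - Δwnm1⟫ + j z - j Δwnm1)
    (hcur : ∀ z : V, ⟪ℓn, z - Δwn⟫ ≤ ⟪A (wnm1 + Δwn), z - Δwn⟫ + j z - j Δwn) :
    m * ‖Δwn‖ ^ 2 ≤ ⟪ℓn - ℓnm1, Δwn⟫ ∧ ‖Δwn‖ ≤ (1 / m) * ‖ℓn - ℓnm1‖ := by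
  have hj0 : j 0 = 0 := by
    have h := hjhom 2 (by norm_num) 0
    simp only [smul_zero] at h
    linarith
  have hsub : j (Δwnm1 + Δwn) ≤ j Δwnm1 + j Δwn := by
    have hc := hjconv.2 (Set.mem_univ Δwnm1) (Set.mem_univ Δwn)
      (by norm_num : (0:ℝ) ≤ 1/2) (by norm_num : (0:ℝ) ≤ 1/2) (by norm_num)
    have h2 := hjhom (1/2) (by norm_num) (Δwnm1 + Δwn)
    rw [smul_add] at h2
    simp only [smul_eq_mul] at hc
    linarith
  have h1 := hprev (Δwnm1 + Δwn)
  rw [add_sub_cancel_left, ← hw] at h1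
  have h2 := hcur 0
  rw [zero_sub, inner_neg_right, inner_neg_right] at h2
  have h3 := hmono (wnm1 + Δwn) wnm1
  rw [add_sub_cancel_left, inner_sub_left] at h3
  have hmain : m * ‖Δwn‖ ^ 2 ≤ ⟪ℓn - ℓnm1, Δwn⟫ := by
    rw [inner_sub_left]
    linarith
  refine ⟨hmain, ?_⟩
  have hcs : ⟪ℓn - ℓnm1, Δwn⟫ ≤ ‖ℓn - ℓnm1‖ * ‖Δwn‖ := real_inner_le_norm _ _
  rcases eq_or_lt_of_le (norm_nonneg Δwn) with h0 | h0
  · rw [← h0]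
    positivity
  · have hle : m * ‖Δwn‖ ^ 2 ≤ ‖ℓn - ℓnm1‖ * ‖Δwn‖ := le_trans hmain hcs
    rw [one_div, ← div_eq_inv_mul, le_div_iff₀ hm]
    nlinarith
end

section
/- Let V be a real Hilbert space, X ⊆ V a convex set, A : V → V strongly monotone with constant m > 0, φ : V → ℝ any functional, and ℓ ∈ V. If u₁, u₂ ∈ X both satisfy the variational inequality ⟪A(u), v − u⟫ + φ(v) − φ(u) ≥ ⟪ℓ, v − u⟫ for all v ∈ X, then u₁ = u₂. -/
open scoped RealInnerProductSpace

section VariationalInequality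

variable {V : Type*} [NormedAddCommGroup V] [InnerProductSpace ℝ V]

def IsVariationalInequalitySolution (X : Set V) (A : V → V) (φ : V → ℝ) (ℓ u : V) : Prop :=
  u ∈ X ∧ ∀ v ∈ X, ⟪ℓ, v - u⟫ ≤ ⟪A u, v - u⟫ + φ v - φ u

/-- Test each solution against the other and add: `φ` and `ℓ` cancel. -/
theorem IsVariationalInequalitySolution.inner_sub_nonpos {X : Set V} {A : V → V} {φ : V → ℝ}
    {ℓ u₁ u₂ : V} (h₁ : IsVariationalInequalitySolution X A φ ℓ u₁)
    (h₂ : IsVariationalInequalitySolution X A φ ℓ u₂) :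
    ⟪A u₁ - A u₂, u₁ - u₂⟫ ≤ 0 := by
  have test₁ := h₁.2 u₂ h₂.1
  have test₂ := h₂.2 u₁ h₁.1
  rw [← neg_sub u₁ u₂, inner_neg_right, inner_neg_right] at test₁
  rw [inner_sub_left]
  linarith

theorem eq_of_strongly_monotone_of_inner_sub_nonpos {A : V → V} {m : ℝ} {u₁ u₂ : V} (hm : 0 < m)
    (hmono : m * ‖u₁ - u₂‖ ^ 2 ≤ ⟪A u₁ - A u₂, u₁ - u₂⟫) (h : ⟪A u₁ - A u₂, u₁ - u₂⟫ ≤ 0) :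
    u₁ = u₂ := by
  have hsq : ‖u₁ - u₂‖ ^ 2 ≤ 0 := nonpos_of_mul_nonpos_right (hmono.trans h) hm
  rwa [sq_nonpos_iff, norm_eq_zero, sub_eq_zero] at hsq

end VariationalInequality

theorem VI_uniqueness_general
    {V : Type*} [NormedAddCommGroup V] [InnerProductSpace ℝ V]
    (X : Set V)
    (A : V → V) (m : ℝ) (hm : 0 < m)
    (hmono : ∀ w₁ w₂ : V, m * ‖w₁ - w₂‖ ^ 2 ≤ ⟪A w₁ - A w₂, w₁ - w₂⟫)
    (φ : V → ℝ) (ℓ : V)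
    (u₁ u₂ : V) (hu₁ : u₁ ∈ X) (hu₂ : u₂ ∈ X)
    (hVI₁ : ∀ v ∈ X, ⟪ℓ, v - u₁⟫ ≤ ⟪A u₁, v - u₁⟫ + φ v - φ u₁)
    (hVI₂ : ∀ v ∈ X, ⟪ℓ, v - u₂⟫ ≤ ⟪A u₂, v - u₂⟫ + φ v - φ u₂) :
    u₁ = u₂ :=
  eq_of_strongly_monotone_of_inner_sub_nonpos hm (hmono u₁ u₂)
    (IsVariationalInequalitySolution.inner_sub_nonpos ⟨hu₁, hVI₁⟩ ⟨hu₂, hVI₂⟩)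

/-- Uniqueness of solutions to the variational inequality with a strongly
monotone operator. -/
theorem VI_uniqueness
    {V : Type*} [NormedAddCommGroup V] [InnerProductSpace ℝ V] [CompleteSpace V]
    (X : Set V) (hXconv : Convex ℝ X)
    (A : V → V) (m : ℝ) (hm : 0 < m)
    (hmono : ∀ w₁ w₂ : V, m * ‖w₁ - w₂‖ ^ 2 ≤ ⟪A w₁ - A w₂, w₁ - w₂⟫)
    (φ : V → ℝ) (ℓ : V)
    (u₁ u₂ : V) (hu₁ : u₁ ∈ X) (hu₂ : u₂ ∈ X)
    (hVI₁ : ∀ v ∈ X, ⟪ℓ, v - u₁⟫ ≤ ⟪A u₁, v - u₁⟫ + φ v - φ u₁)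
    (hVI₂ : ∀ v ∈ X, ⟪ℓ, v - u₂⟫ ≤ ⟪A u₂, v - u₂⟫ + φ v - φ u₂) :
    u₁ = u₂ :=
  VI_uniqueness_general X A m hm hmono φ ℓ u₁ u₂ hu₁ hu₂ hVI₁ hVI₂
end

section
/- Let V be a real Hilbert space and let A : V → V be monotone and hemicontinuous. Then for every u ∈ V, ℓ ∈ V and every constant c > 0, the set { z ∈ V : ⟪A(u + z), z⟫ − ⟪ℓ, z⟫ ≤ c‖z‖ } is closed in the norm topology of V; in particular, if z_k → z in norm and ⟪A(u + z_k), z_k⟫ − ⟪ℓ, z_k⟫ ≤ c‖z_k‖ for all k, then ⟪A(u + z), z⟫ − ⟪ℓ, z⟫ ≤ c‖z‖. -/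
open scoped RealInnerProductSpace
open Filter Topology Metric Set

private lemma loc_bound
    {V : Type*} [NormedAddCommGroup V] [InnerProductSpace ℝ V] [CompleteSpace V]
    (A : V → V)
    (hmono : ∀ w₁ w₂ : V, 0 ≤ ⟪A w₁ - A w₂, w₁ - w₂⟫)
    (x : ℕ → V) (x₀ : V) (hx : Tendsto x atTop (nhds x₀)) :
    ∃ K : ℝ, ∀ᶠ k in atTop, ‖A (x k)‖ ≤ K := by
  obtain ⟨B, hB⟩ : ∃ B : ℝ, ∀ k, ‖x k‖ ≤ B := by
    obtain ⟨B, hB⟩ := (hx.norm).bddAbove_range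
    exact ⟨B, fun k => hB ⟨k, rfl⟩⟩
  have hpt : ∀ y : V, ∀ k, ⟪A (x k), y - x k⟫ ≤ ‖A y‖ * (‖y‖ + B) := by
    intro y k
    have h1 : ⟪A (x k), y - x k⟫ ≤ ⟪A y, y - x k⟫ := by
      have := hmono y (x k)
      rw [inner_sub_left] at this
      linarith
    have h2 : ⟪A y, y - x k⟫ ≤ ‖A y‖ * ‖y - x k‖ := real_inner_le_norm _ _
    have h3 : ‖y - x k‖ ≤ ‖y‖ + B := by
      calc ‖y - x k‖ ≤ ‖y‖ + ‖x k‖ := norm_sub_le _ _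
        _ ≤ ‖y‖ + B := by linarith [hB k]
    nlinarith [norm_nonneg (A y)]
  set E : ℕ → Set V := fun M => {y | ∀ k, ⟪A (x k), y - x k⟫ ≤ (M : ℝ)} with hE
  have hclosed : ∀ M, IsClosed (E M) := by
    intro M
    have : E M = ⋂ k, {y | ⟪A (x k), y - x k⟫ ≤ (M : ℝ)} := by
      ext y; simp [hE]
    rw [this]
    refine isClosed_iInter fun k => isClosed_le ?_ continuous_const
    exact continuous_const.inner (continuous_id.sub continuous_const)
  have hcover : ⋃ M, E M = univ := by
    refine eq_univ_of_forall fun y => ?_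
    obtain ⟨M, hM⟩ := exists_nat_ge (‖A y‖ * (‖y‖ + B))
    exact mem_iUnion.mpr ⟨M, fun k => le_trans (hpt y k) hM⟩
  obtain ⟨M, y₀, hy₀⟩ : ∃ M, ∃ y₀, y₀ ∈ interior (E M) := by
    obtain ⟨M, y₀, h⟩ := nonempty_interior_of_iUnion_of_closed hclosed hcover
    exact ⟨M, y₀, h⟩
  obtain ⟨r, hr, hball⟩ := Metric.isOpen_iff.mp isOpen_interior y₀ hy₀
  have hballE : ball y₀ r ⊆ E M := hball.trans interior_subset
  set C' : ℝ := ‖A ((2:ℝ) • x₀ - y₀)‖ * (‖(2:ℝ) • x₀ - y₀‖ + B) with hC'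
  set M' : ℝ := ((M : ℝ) + C') / 2 with hM'
  refine ⟨max (8 * M' / r) 0, ?_⟩
  have hev : ∀ᶠ k in atTop, dist (x k) x₀ < r / 8 :=
    hx (Metric.ball_mem_nhds x₀ (by positivity))
  filter_upwards [hev] with k hk
  by_cases ha : A (x k) = 0
  · simp [ha, le_max_iff]
  · set a := A (x k) with haa
    have hn : 0 < ‖a‖ := norm_pos_iff.mpr ha
    set v : V := ((r / 4) / ‖a‖) • a with hv
    have hvnorm : ‖v‖ = r / 4 := by
      rw [hv, norm_smul, Real.norm_eq_abs, abs_div, abs_of_pos (by linarith : (0:ℝ) < r/4),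
        abs_of_pos hn]
      field_simp
    -- reflection identity
    have hdecomp : (x₀ + v) - x k
        = (1/2 : ℝ) • ((y₀ + (2:ℝ) • v) - x k) + (1/2 : ℝ) • (((2:ℝ) • x₀ - y₀) - x k) := by
      module
    have hmem : y₀ + (2:ℝ) • v ∈ ball y₀ r := by
      rw [mem_ball, dist_eq_norm]
      have : y₀ + (2:ℝ) • v - y₀ = (2:ℝ) • v := by abel
      rw [this, norm_smul]
      simp [hvnorm]
      linarith
    have h1 : ⟪a, (y₀ + (2:ℝ) • v) - x k⟫ ≤ (M : ℝ) := hballE hmem k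
    have h2 : ⟪a, ((2:ℝ) • x₀ - y₀) - x k⟫ ≤ C' := hpt _ k
    have hfb : ⟪a, (x₀ + v) - x k⟫ ≤ M' := by
      rw [hdecomp, inner_add_right, real_inner_smul_right, real_inner_smul_right, hM']
      linarith
    have hav : ⟪a, v⟫ = (r / 4) * ‖a‖ := by
      rw [hv, real_inner_smul_right, real_inner_self_eq_norm_sq]
      field_simp
    have hxk : ⟪a, x k - x₀⟫ ≤ ‖a‖ * (r / 8) := by
      have := real_inner_le_norm a (x k - x₀)
      have hd : ‖x k - x₀‖ ≤ r / 8 := by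
        rw [← dist_eq_norm]; linarith
      nlinarith [norm_nonneg a]
    have hsplit : ⟪a, v⟫ = ⟪a, (x₀ + v) - x k⟫ + ⟪a, x k - x₀⟫ := by
      rw [← inner_add_right]
      congr 1
      abel
    have : (r/4) * ‖a‖ ≤ M' + ‖a‖ * (r/8) := by
      rw [← hav]; rw [hsplit]; linarith
    have hfin : ‖a‖ ≤ 8 * M' / r := by
      rw [le_div_iff₀ hr]
      nlinarith
    exact le_trans hfin (le_max_left _ _)


/-- For a monotone hemicontinuous operator `A`, the sublevel set
`{ z : ⟪A (u + z), z⟫ - ⟪ℓ, z⟫ ≤ c‖z‖ }` is norm-closed; in particular it is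
sequentially closed. -/
theorem sublevel_set_closed
    {V : Type*} [NormedAddCommGroup V] [InnerProductSpace ℝ V] [CompleteSpace V]
    (A : V → V)
    (hmono : ∀ w₁ w₂ : V, 0 ≤ ⟪A w₁ - A w₂, w₁ - w₂⟫)
    (hhemi : ∀ x y : V,
      ContinuousOn (fun t : ℝ => ⟪A ((1 - t) • x + t • y), x - y⟫) (Set.Icc 0 1))
    (u ℓ : V) (c : ℝ) (hc : 0 < c) :
    IsClosed { z : V | ⟪A (u + z), z⟫ - ⟪ℓ, z⟫ ≤ c * ‖z‖ } ∧
    ∀ (zk : ℕ → V) (z : V), Filter.Tendsto zk Filter.atTop (nhds z) →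
      (∀ k : ℕ, ⟪A (u + zk k), zk k⟫ - ⟪ℓ, zk k⟫ ≤ c * ‖zk k‖) →
      ⟪A (u + z), z⟫ - ⟪ℓ, z⟫ ≤ c * ‖z‖ := by
  have key : ∀ (zk : ℕ → V) (z : V), Filter.Tendsto zk Filter.atTop (nhds z) →
      (∀ k : ℕ, ⟪A (u + zk k), zk k⟫ - ⟪ℓ, zk k⟫ ≤ c * ‖zk k‖) →
      ⟪A (u + z), z⟫ - ⟪ℓ, z⟫ ≤ c * ‖z‖ := by
    intro zk z hz hk
    have hloc : ∀ (x : ℕ → V) (x₀ : V), Tendsto x atTop (nhds x₀) →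
        ∃ K : ℝ, ∀ᶠ k in atTop, ‖A (x k)‖ ≤ K := fun x x₀ hx => loc_bound A hmono x x₀ hx
    set L : ℝ := ⟪ℓ, z⟫ + c * ‖z‖ with hLdef
    obtain ⟨K₀, hK₀⟩ := hloc (fun k => u + zk k) (u + z) (tendsto_const_nhds.add hz)
    set K : ℝ := max K₀ 0 with hKdef
    have hK : ∀ᶠ k in atTop, ‖A (u + zk k)‖ ≤ K :=
      hK₀.mono fun k h => le_trans h (le_max_left _ _)
    have hL : Tendsto (fun k => ⟪ℓ, zk k⟫ + c * ‖zk k‖) atTop (𝓝 L) := by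
      refine Tendsto.add ?_ ?_
      · exact (continuous_const.inner continuous_id).continuousAt.tendsto.comp hz
      · exact (tendsto_const_nhds.mul hz.norm)
    have hnorm : Tendsto (fun k => ‖zk k - z‖) atTop (𝓝 0) := by
      have := (hz.sub (tendsto_const_nhds : Tendsto (fun _ : ℕ => z) atTop (𝓝 z))).norm
      simpa using this
    -- Step A
    have stepA : ∀ t : ℝ, 0 < t → t ≤ 1 → ⟪A (u + (1 - t) • z), z⟫ ≤ L := by
      intro t ht ht1
      set w : V := A (u + (1 - t) • z) with hw
      have hg : Tendsto (fun k => ⟪w, zk k - (1 - t) • z⟫) atTop (𝓝 ⟪w, z - (1 - t) • z⟫) := by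
        exact (continuous_const.inner (continuous_id.sub continuous_const)).continuousAt.tendsto.comp hz
      have hub : ∀ᶠ k in atTop, ⟪w, zk k - (1 - t) • z⟫
          ≤ t * (⟪ℓ, zk k⟫ + c * ‖zk k‖) + (1 - t) * (K * ‖zk k - z‖) := by
        filter_upwards [hK] with k hKk
        have hm : ⟪w, zk k - (1 - t) • z⟫ ≤ ⟪A (u + zk k), zk k - (1 - t) • z⟫ := by
          have := hmono (u + zk k) (u + (1 - t) • z)
          rw [inner_sub_left] at this
          have he : (u + zk k) - (u + (1 - t) • z) = zk k - (1 - t) • z := by abel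
          rw [he] at this
          linarith
        have hsplit : zk k - (1 - t) • z = t • zk k + (1 - t) • (zk k - z) := by module
        have h1 : ⟪A (u + zk k), zk k⟫ ≤ ⟪ℓ, zk k⟫ + c * ‖zk k‖ := by linarith [hk k]
        have h2 : ⟪A (u + zk k), zk k - z⟫ ≤ K * ‖zk k - z‖ := by
          have := real_inner_le_norm (A (u + zk k)) (zk k - z)
          nlinarith [norm_nonneg (zk k - z), norm_nonneg (A (u + zk k))]
        calc ⟪w, zk k - (1 - t) • z⟫ ≤ ⟪A (u + zk k), zk k - (1 - t) • z⟫ := hm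
          _ = t * ⟪A (u + zk k), zk k⟫ + (1 - t) * ⟪A (u + zk k), zk k - z⟫ := by
              rw [hsplit, inner_add_right, real_inner_smul_right, real_inner_smul_right]
          _ ≤ t * (⟪ℓ, zk k⟫ + c * ‖zk k‖) + (1 - t) * (K * ‖zk k - z‖) := by
              have h1t : 0 ≤ 1 - t := by linarith
              have hKnn : 0 ≤ K := le_max_right _ _
              nlinarith [norm_nonneg (zk k - z)]
      have hub_lim : Tendsto (fun k => t * (⟪ℓ, zk k⟫ + c * ‖zk k‖) + (1 - t) * (K * ‖zk k - z‖))
          atTop (𝓝 (t * L + (1 - t) * (K * 0))) :=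
        (tendsto_const_nhds.mul hL).add (tendsto_const_nhds.mul (tendsto_const_nhds.mul hnorm))
      have hle := le_of_tendsto_of_tendsto hg hub_lim hub
      have hzz : z - (1 - t) • z = t • z := by module
      rw [hzz, real_inner_smul_right] at hle
      have : t * ⟪w, z⟫ ≤ t * L := by linarith
      exact le_of_mul_le_mul_left this ht
    -- Step B: hemicontinuity
    have hcont := hhemi (u + z) u
    have heq : ∀ t : ℝ, (1 - t) • (u + z) + t • u = u + (1 - t) • z := fun t => by module
    have heq2 : (u + z) - u = z := by abel
    simp only [heq, heq2] at hcont
    have hφ0 : Tendsto (fun n : ℕ => ⟪A (u + (1 - (1 / ((n:ℝ) + 1))) • z), z⟫) atTop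
        (𝓝 ⟪A (u + (1 - (0:ℝ)) • z), z⟫) := by
      have hc0 : ContinuousWithinAt (fun t : ℝ => ⟪A (u + (1 - t) • z), z⟫) (Icc 0 1) 0 :=
        hcont.continuousWithinAt (by norm_num : (0:ℝ) ∈ Icc (0:ℝ) 1)
      refine hc0.tendsto.comp (tendsto_nhdsWithin_iff.mpr ⟨tendsto_one_div_add_atTop_nhds_zero_nat, ?_⟩)
      refine Eventually.of_forall fun n => ?_
      constructor
      · positivity
      · rw [div_le_one (by positivity)]
        linarith [Nat.cast_nonneg (α := ℝ) n]
    have hbd : ∀ n : ℕ, ⟪A (u + (1 - (1 / ((n:ℝ) + 1))) • z), z⟫ ≤ L := by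
      intro n
      refine stepA _ (by positivity) ?_
      rw [div_le_one (by positivity)]
      linarith [Nat.cast_nonneg (α := ℝ) n]
    have hfinal := le_of_tendsto hφ0 (Eventually.of_forall hbd)
    simp only [sub_zero, one_smul] at hfinal
    linarith
  refine ⟨?_, key⟩
  have hseq : IsSeqClosed { z : V | ⟪A (u + z), z⟫ - ⟪ℓ, z⟫ ≤ c * ‖z‖ } :=
    fun zk z hmem hz => key zk z hz hmem
  exact hseq.isClosed
end

section
/- Let V be a real Hilbert space and A : V → V Lipschitz continuous with constant c_A. Let T > 0, N ∈ ℕ, ΔT = T/N, t_n = nΔT, w_0, …, w_N ∈ V with piecewise linear interpolant w^N(t) = w_{n-1} + ((t − t_{n-1})/ΔT)(w_n − w_{n-1}) for t ∈ [t_{n-1}, t_n], and let z_1, …, z_N ∈ V with step function z^N(t) = z_n for t ∈ (t_{n-1}, t_n]. Then | Σ_{n=1}^N (ΔT/2) ⟪A(w_{n-1}) + A(w_n), z_n⟫ − ∫_0^T ⟪A(w^N(s)), z^N(s)⟫ ds | ≤ (c_A ΔT / 2) Σ_{n=1}^N ‖w_n − w_{n-1}‖ ‖z_n‖. -/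
open scoped RealInnerProductSpace
open MeasureTheory

/-- Quadrature estimate: the trapezoidal sum for `⟪A(wᴺ), zᴺ⟫` differs from the
integral by at most `(c_A ΔT/2) Σₙ ‖Δwₙ‖ ‖zₙ‖`. -/
theorem trapezoid_quadrature_estimate
    {V : Type*} [NormedAddCommGroup V] [InnerProductSpace ℝ V]
    (A : V → V) (cA : ℝ)
    (hA : ∀ w₁ w₂ : V, ‖A w₁ - A w₂‖ ≤ cA * ‖w₁ - w₂‖)
    (T : ℝ) (hT : 0 < T) (N : ℕ) (hN : 0 < N)
    (w : ℕ → V) (wN : ℝ → V)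
    (hwN : ∀ n : ℕ, 1 ≤ n → n ≤ N →
      ∀ t ∈ Set.Icc (((n - 1 : ℕ) : ℝ) * (T / N)) ((n : ℝ) * (T / N)),
        wN t = w (n - 1) + ((t - ((n - 1 : ℕ) : ℝ) * (T / N)) / (T / N)) • (w n - w (n - 1)))
    (z : ℕ → V) (zN : ℝ → V)
    (hzN : ∀ n : ℕ, 1 ≤ n → n ≤ N →
      ∀ t ∈ Set.Ioc (((n - 1 : ℕ) : ℝ) * (T / N)) ((n : ℝ) * (T / N)), zN t = z n) :
    |(∑ n ∈ Finset.Icc 1 N, ((T / N) / 2) * ⟪A (w (n - 1)) + A (w n), z n⟫) -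
        ∫ s in (0:ℝ)..T, ⟪A (wN s), zN s⟫| ≤
      (cA * (T / N) / 2) * ∑ n ∈ Finset.Icc 1 N, ‖w n - w (n - 1)‖ * ‖z n‖ := by
  have hNR : (0:ℝ) < N := by exact_mod_cast hN
  set Δ : ℝ := T / N with hΔdef
  have hΔ : 0 < Δ := div_pos hT hNR
  have hAc : Continuous A := by
    have hlip : LipschitzWith (Real.toNNReal cA) A := by
      apply LipschitzWith.of_dist_le_mul
      intro x y
      rw [dist_eq_norm, dist_eq_norm]
      calc ‖A x - A y‖ ≤ cA * ‖x - y‖ := hA x y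
        _ ≤ Real.toNNReal cA * ‖x - y‖ :=
          mul_le_mul_of_nonneg_right (Real.le_coe_toNNReal cA) (norm_nonneg _)
    exact hlip.continuous
  set F : ℝ → ℝ := fun s => ⟪A (wN s), zN s⟫ with hF
  set g : ℕ → ℝ → ℝ :=
    fun i s => ⟪A (w i + ((s - (i:ℝ) * Δ) / Δ) • (w (i+1) - w i)), z (i+1)⟫ with hg'
  have hg : ∀ i : ℕ, Continuous (g i) := by
    intro i
    apply Continuous.inner _ continuous_const
    exact hAc.comp (by fun_prop)
  have heq : ∀ i : ℕ, i < N →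
      Set.EqOn F (g i) (Set.Ioc ((i:ℝ) * Δ) (((i:ℝ) + 1) * Δ)) := by
    intro i hi s hs
    have h1 : 1 ≤ i + 1 := Nat.succ_le_succ (Nat.zero_le i)
    have h2 : i + 1 ≤ N := hi
    have hw := hwN (i+1) h1 h2 s
    have hz := hzN (i+1) h1 h2 s
    simp only [Nat.add_sub_cancel] at hw hz
    push_cast at hw hz
    have hws := hw (Set.Ioc_subset_Icc_self hs)
    have hzs := hz hs
    simp only [hF, hg', hws, hzs]
  have hab : ∀ i : ℕ, (i:ℝ) * Δ ≤ ((i:ℝ) + 1) * Δ := by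
    intro i; nlinarith
  have hint : ∀ i : ℕ, i < N →
      IntervalIntegrable F volume ((i:ℝ) * Δ) (((i:ℝ) + 1) * Δ) := by
    intro i hi
    rw [intervalIntegrable_iff_integrableOn_Ioc_of_le (hab i)]
    exact ((hg i).integrableOn_Ioc).congr_fun (heq i hi).symm measurableSet_Ioc
  have hsplit : ∫ s in (0:ℝ)..T, F s
      = ∑ i ∈ Finset.range N, ∫ s in ((i:ℝ) * Δ)..(((i:ℝ) + 1) * Δ), F s := by
    have hadj := intervalIntegral.sum_integral_adjacent_intervals
      (a := fun i : ℕ => (i:ℝ) * Δ) (μ := volume) (f := F) (n := N)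
      (fun i hi => by push_cast; exact hint i hi)
    have hTN : ((N:ℕ):ℝ) * Δ = T := by rw [hΔdef]; field_simp
    simp only [Nat.cast_zero, zero_mul, Nat.cast_add, Nat.cast_one, hTN] at hadj
    exact hadj.symm
  have key : ∀ i : ℕ, i < N →
      |Δ / 2 * ⟪A (w i) + A (w (i+1)), z (i+1)⟫
        - ∫ s in ((i:ℝ) * Δ)..(((i:ℝ) + 1) * Δ), F s|
      ≤ cA * Δ / 2 * (‖w (i+1) - w i‖ * ‖z (i+1)‖) := by
    intro i hi
    have hIeq : ∫ s in ((i:ℝ) * Δ)..(((i:ℝ) + 1) * Δ), F s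
        = ∫ s in ((i:ℝ) * Δ)..(((i:ℝ) + 1) * Δ), g i s := by
      rw [intervalIntegral.integral_of_le (hab i), intervalIntegral.integral_of_le (hab i)]
      exact setIntegral_congr_fun measurableSet_Ioc (heq i hi)
    rw [hIeq]
    have h2 : Δ / 2 * ⟪A (w i) + A (w (i+1)), z (i+1)⟫
        - ∫ s in ((i:ℝ) * Δ)..(((i:ℝ) + 1) * Δ), g i s
        = ∫ s in ((i:ℝ) * Δ)..(((i:ℝ) + 1) * Δ),
            (⟪(1/2 : ℝ) • (A (w i) + A (w (i+1))), z (i+1)⟫ - g i s) := by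
      rw [intervalIntegral.integral_sub intervalIntegrable_const
        ((hg i).intervalIntegrable _ _), intervalIntegral.integral_const]
      have hΔe : ((i:ℝ) + 1) * Δ - (i:ℝ) * Δ = Δ := by ring
      rw [hΔe, real_inner_smul_left]
      simp only [smul_eq_mul]
      ring
    rw [h2]
    have hbound : ∀ s ∈ Set.uIoc ((i:ℝ) * Δ) (((i:ℝ) + 1) * Δ),
        ‖⟪(1/2 : ℝ) • (A (w i) + A (w (i+1))), z (i+1)⟫ - g i s‖
          ≤ cA / 2 * (‖w (i+1) - w i‖ * ‖z (i+1)‖) := by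
      intro s hs
      rw [Set.uIoc_of_le (hab i)] at hs
      set θ : ℝ := (s - (i:ℝ) * Δ) / Δ with hθdef
      have hθ0 : 0 ≤ θ := div_nonneg (by linarith [hs.1]) hΔ.le
      have hθ1 : θ ≤ 1 := by
        rw [hθdef, div_le_one hΔ]; linarith [hs.2]
      set u := A (w i)
      set v := A (w (i+1))
      set m := A (w i + θ • (w (i+1) - w i))
      have hsub : (⟪(1/2 : ℝ) • (u + v), z (i+1)⟫ - g i s)
          = ⟪(1/2 : ℝ) • (u + v) - m, z (i+1)⟫ := by
        rw [inner_sub_left]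
      rw [hsub, Real.norm_eq_abs]
      have hcs : |⟪(1/2 : ℝ) • (u + v) - m, z (i+1)⟫|
          ≤ ‖(1/2 : ℝ) • (u + v) - m‖ * ‖z (i+1)‖ := abs_real_inner_le_norm _ _
      have hx : (1/2 : ℝ) • (u + v) - m = (1/2 : ℝ) • (u - m) + (1/2 : ℝ) • (v - m) := by
        module
      have h1 : ‖(1/2 : ℝ) • (u + v) - m‖
          ≤ (1/2) * ‖u - m‖ + (1/2) * ‖v - m‖ := by
        rw [hx]
        calc ‖(1/2 : ℝ) • (u - m) + (1/2 : ℝ) • (v - m)‖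
            ≤ ‖(1/2 : ℝ) • (u - m)‖ + ‖(1/2 : ℝ) • (v - m)‖ := norm_add_le _ _
          _ = (1/2) * ‖u - m‖ + (1/2) * ‖v - m‖ := by
              rw [norm_smul, norm_smul]; norm_num
      have hu : ‖u - m‖ ≤ cA * (θ * ‖w (i+1) - w i‖) := by
        have := hA (w i) (w i + θ • (w (i+1) - w i))
        have he : w i - (w i + θ • (w (i+1) - w i)) = (-θ) • (w (i+1) - w i) := by module
        rw [he, norm_smul] at this
        simpa [abs_of_nonneg hθ0, mul_assoc] using this
      have hv : ‖v - m‖ ≤ cA * ((1 - θ) * ‖w (i+1) - w i‖) := by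
        have := hA (w (i+1)) (w i + θ • (w (i+1) - w i))
        have he : w (i+1) - (w i + θ • (w (i+1) - w i)) = (1 - θ) • (w (i+1) - w i) := by
          module
        rw [he, norm_smul] at this
        simpa [abs_of_nonneg (by linarith : (0:ℝ) ≤ 1 - θ), mul_assoc] using this
      have h3 : ‖(1/2 : ℝ) • (u + v) - m‖ ≤ cA / 2 * ‖w (i+1) - w i‖ := by
        calc ‖(1/2 : ℝ) • (u + v) - m‖ ≤ (1/2) * ‖u - m‖ + (1/2) * ‖v - m‖ := h1
          _ ≤ (1/2) * (cA * (θ * ‖w (i+1) - w i‖))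
              + (1/2) * (cA * ((1 - θ) * ‖w (i+1) - w i‖)) := by
              gcongr
          _ = cA / 2 * ‖w (i+1) - w i‖ := by ring
      calc |⟪(1/2 : ℝ) • (u + v) - m, z (i+1)⟫|
          ≤ ‖(1/2 : ℝ) • (u + v) - m‖ * ‖z (i+1)‖ := hcs
        _ ≤ (cA / 2 * ‖w (i+1) - w i‖) * ‖z (i+1)‖ :=
            mul_le_mul_of_nonneg_right h3 (norm_nonneg _)
        _ = cA / 2 * (‖w (i+1) - w i‖ * ‖z (i+1)‖) := by ring
    have hni := intervalIntegral.norm_integral_le_of_norm_le_const hbound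
    rw [Real.norm_eq_abs] at hni
    have habs : |(((i:ℝ) + 1) * Δ) - ((i:ℝ) * Δ)| = Δ := by
      rw [abs_of_nonneg (by linarith [hΔ.le] : (0:ℝ) ≤ ((i:ℝ) + 1) * Δ - (i:ℝ) * Δ)]
      ring
    rw [habs] at hni
    calc |∫ s in ((i:ℝ) * Δ)..(((i:ℝ) + 1) * Δ),
            (⟪(1/2 : ℝ) • (A (w i) + A (w (i+1))), z (i+1)⟫ - g i s)|
        ≤ cA / 2 * (‖w (i+1) - w i‖ * ‖z (i+1)‖) * Δ := hni
      _ = cA * Δ / 2 * (‖w (i+1) - w i‖ * ‖z (i+1)‖) := by ring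
  -- reindex the sums
  have hsum1 : ∑ n ∈ Finset.Icc 1 N, (Δ / 2) * ⟪A (w (n - 1)) + A (w n), z n⟫
      = ∑ i ∈ Finset.range N, Δ / 2 * ⟪A (w i) + A (w (i+1)), z (i+1)⟫ := by
    rw [← Finset.Ico_add_one_right_eq_Icc, Finset.sum_Ico_eq_sum_range]
    simp [add_comm 1]
  have hsum2 : ∑ n ∈ Finset.Icc 1 N, ‖w n - w (n - 1)‖ * ‖z n‖
      = ∑ i ∈ Finset.range N, ‖w (i+1) - w i‖ * ‖z (i+1)‖ := by
    rw [← Finset.Ico_add_one_right_eq_Icc, Finset.sum_Ico_eq_sum_range]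
    simp [add_comm 1]
  rw [hsum1, hsum2, hsplit, ← Finset.sum_sub_distrib, Finset.mul_sum]
  calc |∑ i ∈ Finset.range N, (Δ / 2 * ⟪A (w i) + A (w (i+1)), z (i+1)⟫
          - ∫ s in ((i:ℝ) * Δ)..(((i:ℝ) + 1) * Δ), F s)|
      ≤ ∑ i ∈ Finset.range N, |Δ / 2 * ⟪A (w i) + A (w (i+1)), z (i+1)⟫
          - ∫ s in ((i:ℝ) * Δ)..(((i:ℝ) + 1) * Δ), F s| := Finset.abs_sum_le_sum_abs _ _
    _ ≤ ∑ i ∈ Finset.range N, cA * Δ / 2 * (‖w (i+1) - w i‖ * ‖z (i+1)‖) :=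
        Finset.sum_le_sum (fun i hi => key i (Finset.mem_range.mp hi))
end

section
/- Let V be a real Hilbert space and A : V → V Lipschitz continuous with constant c_A. Let T > 0, N ∈ ℕ, ΔT = T/N, t_n = nΔT, and w_0, …, w_N ∈ V with piecewise linear interpolant w^N(t) = w_{n-1} + ((t − t_{n-1})/ΔT)(w_n − w_{n-1}) for t ∈ [t_{n-1}, t_n], whose derivative is ẇ^N(t) = (w_n − w_{n-1})/ΔT for almost every t ∈ (t_{n-1}, t_n). Then | Σ_{n=1}^N ⟪A(w_n), w_n − w_{n-1}⟫ − ∫_0^T ⟪A(w^N(s)), ẇ^N(s)⟫ ds | ≤ (c_A / 2) Σ_{n=1}^N ‖w_n − w_{n-1}‖². -/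
/-!
On the `n`-th step the interpolant runs at constant speed along the segment from `w (n - 1)` to
`w n`, so after rescaling that step to `[0, 1]` its integral is
`∫ θ in 0..1, ⟪A (w (n - 1) + θ • Δwₙ), Δwₙ⟫`. By Cauchy–Schwarz and the Lipschitz bound this
integrand differs from `⟪A (w n), Δwₙ⟫` by at most `c_A (1 - θ) ‖Δwₙ‖²`, and `∫₀¹ (1 - θ) = 1/2`.
Summing over the steps gives the estimate.
-/

open scoped RealInnerProductSpace
open MeasureTheory Finset intervalIntegral

section PiecewiseIntegrals

variable {E : Type*} [NormedAddCommGroup E] [NormedSpace ℝ E]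

theorem intervalIntegral.sum_Icc_integral_adjacent_intervals {f : ℝ → E} {x : ℕ → ℝ} {N : ℕ}
    (hf : ∀ n ∈ Icc 1 N, IntervalIntegrable f volume (x (n - 1)) (x n)) :
    ∑ n ∈ Icc 1 N, ∫ t in x (n - 1)..x n, f t = ∫ t in x 0..x N, f t := by
  rw [← Ico_add_one_right_eq_Icc, ← zero_add 1, ← sum_Ico_add', ← range_eq_Ico]
  exact sum_integral_adjacent_intervals fun k hk => hf (k + 1) (by simp; omega)

theorem intervalIntegral.integral_eq_sum_integral_of_eqOn_Ioo {f : ℝ → E} {g : ℕ → ℝ → E}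
    {x : ℕ → ℝ} {N : ℕ} (hx : Monotone x)
    (hg : ∀ n ∈ Icc 1 N, IntervalIntegrable (g n) volume (x (n - 1)) (x n))
    (hfg : ∀ n ∈ Icc 1 N, Set.EqOn f (g n) (Set.Ioo (x (n - 1)) (x n))) :
    ∫ t in x 0..x N, f t = ∑ n ∈ Icc 1 N, ∫ t in x (n - 1)..x n, g n t := by
  have hfg' : ∀ n ∈ Icc 1 N, Set.EqOn f (g n) (Set.uIoo (x (n - 1)) (x n)) := fun n hn => by
    rw [Set.uIoo_of_le (hx (n.sub_le 1))]; exact hfg n hn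
  rw [← sum_Icc_integral_adjacent_intervals fun n hn => (hg n hn).congr_uIoo (hfg' n hn).symm]
  exact sum_congr rfl fun n hn => integral_congr_uIoo (hfg' n hn)

theorem intervalIntegral.integral_inv_smul_comp_div (g : ℝ → E) (a : ℝ) {h : ℝ} (hh : h ≠ 0) :
    ∫ t in a..a + h, h⁻¹ • g ((t - a) / h) = ∫ θ in (0:ℝ)..1, g θ := by
  simp_rw [integral_smul, sub_div, integral_comp_div_sub g hh, smul_smul, inv_mul_cancel₀ hh,
    one_smul, add_div, div_self hh, sub_self, add_sub_cancel_left]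

end PiecewiseIntegrals

theorem continuous_of_norm_sub_le_mul {E F : Type*} [SeminormedAddCommGroup E]
    [SeminormedAddCommGroup F] {f : E → F} {K : ℝ} (hf : ∀ x y, ‖f x - f y‖ ≤ K * ‖x - y‖) :
    Continuous f :=
  (LipschitzWith.of_dist_le' fun x y => by simpa only [dist_eq_norm] using hf x y).continuous

section Lipschitz

variable {V : Type*} [NormedAddCommGroup V] [InnerProductSpace ℝ V] {A : V → V} {cA : ℝ}

theorem abs_inner_sub_integral_segment_le (hA : ∀ w₁ w₂ : V, ‖A w₁ - A w₂‖ ≤ cA * ‖w₁ - w₂‖)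
    (u v : V) :
    |⟪A v, v - u⟫ - ∫ θ in (0:ℝ)..1, ⟪A (u + θ • (v - u)), v - u⟫| ≤ cA / 2 * ‖v - u‖ ^ 2 := by
  have hcont : Continuous fun θ : ℝ => ⟪A (u + θ • (v - u)), v - u⟫ :=
    ((continuous_of_norm_sub_le_mul hA).comp (by fun_prop)).inner continuous_const
  have hpoint : ∀ θ ∈ Set.Icc (0:ℝ) 1,
      |⟪A v, v - u⟫ - ⟪A (u + θ • (v - u)), v - u⟫| ≤ cA * ‖v - u‖ ^ 2 * (1 - θ) := by
    intro θ hθ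
    have hrest : v - (u + θ • (v - u)) = (1 - θ) • (v - u) := by module
    calc |⟪A v, v - u⟫ - ⟪A (u + θ • (v - u)), v - u⟫|
        = |⟪A v - A (u + θ • (v - u)), v - u⟫| := by rw [inner_sub_left]
      _ ≤ ‖A v - A (u + θ • (v - u))‖ * ‖v - u‖ := abs_real_inner_le_norm _ _
      _ ≤ cA * ‖v - (u + θ • (v - u))‖ * ‖v - u‖ := by gcongr; exact hA _ _
      _ = cA * ‖v - u‖ ^ 2 * (1 - θ) := by
        rw [hrest, norm_smul, Real.norm_of_nonneg (sub_nonneg.2 hθ.2)]; ring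
  calc |⟪A v, v - u⟫ - ∫ θ in (0:ℝ)..1, ⟪A (u + θ • (v - u)), v - u⟫|
      = |∫ θ in (0:ℝ)..1, (⟪A v, v - u⟫ - ⟪A (u + θ • (v - u)), v - u⟫)| := by
        rw [integral_sub intervalIntegrable_const (hcont.intervalIntegrable _ _)]; simp
    _ ≤ ∫ θ in (0:ℝ)..1, |⟪A v, v - u⟫ - ⟪A (u + θ • (v - u)), v - u⟫| :=
        abs_integral_le_integral_abs zero_le_one
    _ ≤ ∫ θ in (0:ℝ)..1, cA * ‖v - u‖ ^ 2 * (1 - θ) :=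
        integral_mono_on zero_le_one ((continuous_const.sub hcont).abs.intervalIntegrable _ _)
          (Continuous.intervalIntegrable (by fun_prop) _ _) hpoint
    _ = cA / 2 * ‖v - u‖ ^ 2 := by
        rw [intervalIntegral.integral_const_mul, integral_sub intervalIntegrable_const
          intervalIntegrable_id, integral_id]
        norm_num; ring

theorem abs_inner_sub_integral_interpolant_le
    (hA : ∀ w₁ w₂ : V, ‖A w₁ - A w₂‖ ≤ cA * ‖w₁ - w₂‖) (u v : V) (a : ℝ) {h : ℝ} (hh : h ≠ 0) :
    |⟪A v, v - u⟫ - ∫ t in a..a + h, ⟪A (u + ((t - a) / h) • (v - u)), h⁻¹ • (v - u)⟫| ≤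
      cA / 2 * ‖v - u‖ ^ 2 := by
  simp_rw [real_inner_smul_right, ← smul_eq_mul (a := h⁻¹),
    integral_inv_smul_comp_div (fun θ => ⟪A (u + θ • (v - u)), v - u⟫) a hh]
  exact abs_inner_sub_integral_segment_le hA u v

end Lipschitz

/-- Quadrature estimate for the term `⟪A(wᴺ), ẇᴺ⟫`: the sum `Σₙ ⟪A(wₙ), Δwₙ⟫`
differs from the integral by at most `(c_A/2) Σₙ ‖Δwₙ‖²`. -/
theorem derivative_quadrature_estimate
    {V : Type*} [NormedAddCommGroup V] [InnerProductSpace ℝ V]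
    (A : V → V) (cA : ℝ)
    (hA : ∀ w₁ w₂ : V, ‖A w₁ - A w₂‖ ≤ cA * ‖w₁ - w₂‖)
    (T : ℝ) (hT : 0 < T) (N : ℕ) (hN : 0 < N)
    (w : ℕ → V) (wN wdotN : ℝ → V)
    (hwN : ∀ n : ℕ, 1 ≤ n → n ≤ N →
      ∀ t ∈ Set.Icc (((n - 1 : ℕ) : ℝ) * (T / N)) ((n : ℝ) * (T / N)),
        wN t = w (n - 1) + ((t - ((n - 1 : ℕ) : ℝ) * (T / N)) / (T / N)) • (w n - w (n - 1)))
    (hwdotN : ∀ n : ℕ, 1 ≤ n → n ≤ N →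
      ∀ t ∈ Set.Ioo (((n - 1 : ℕ) : ℝ) * (T / N)) ((n : ℝ) * (T / N)),
        wdotN t = (T / N)⁻¹ • (w n - w (n - 1))) :
    |(∑ n ∈ Finset.Icc 1 N, ⟪A (w n), w n - w (n - 1)⟫) -
        ∫ s in (0:ℝ)..T, ⟪A (wN s), wdotN s⟫| ≤
      (cA / 2) * ∑ n ∈ Finset.Icc 1 N, ‖w n - w (n - 1)‖ ^ 2 := by
  have hΔT : 0 < T / N := div_pos hT (Nat.cast_pos.2 hN)
  let t : ℕ → ℝ := fun k => k * (T / N)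
  let piece : ℕ → ℝ → ℝ := fun n s =>
    ⟪A (w (n - 1) + ((s - t (n - 1)) / (T / N)) • (w n - w (n - 1))), (T / N)⁻¹ • (w n - w (n - 1))⟫
  have ht_succ : ∀ n ∈ Icc 1 N, t n = t (n - 1) + T / N := fun n hn => by
    simp only [t, Nat.cast_sub (mem_Icc.1 hn).1]; ring
  have hsplit : ∫ s in t 0..t N, ⟪A (wN s), wdotN s⟫ =
      ∑ n ∈ Icc 1 N, ∫ s in t (n - 1)..t n, piece n s := by
    refine integral_eq_sum_integral_of_eqOn_Ioo (fun k l hkl => by dsimp only [t]; gcongr)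
      (fun n _ => Continuous.intervalIntegrable ?_ _ _) fun n hn s hs => ?_
    · exact ((continuous_of_norm_sub_le_mul hA).comp (by fun_prop)).inner continuous_const
    · obtain ⟨h1n, hnN⟩ := mem_Icc.1 hn
      simp only [piece, t, hwN n h1n hnN s (Set.Ioo_subset_Icc_self hs), hwdotN n h1n hnN s hs]
  have ht0 : t 0 = 0 := by simp [t]
  have htN : t N = T := by simp only [t]; field_simp
  rw [← ht0, ← htN, hsplit, ← sum_sub_distrib, mul_sum]
  refine (abs_sum_le_sum_abs _ _).trans (sum_le_sum fun n hn => ?_)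
  rw [ht_succ n hn]
  exact abs_inner_sub_integral_interpolant_le hA _ _ _ hΔT.ne'
end

section
/- Let d ≥ 1, H₀ > 0, P₀ > 0 and m > 1 be real numbers. Define g : [0, P₀) → ℝ by g(r) = (H₀ P₀^m / (2(m−1))) ((P₀ − r)^{1−m} − (P₀ + r)^{1−m}) and define f on the open ball B = { p ∈ ℝ^d : ‖p‖ < P₀ } by f(p) = g(‖p‖) p/‖p‖ for p ≠ 0 and f(0) = 0. Then f is strongly monotone on B with constant H₀: for all p, q ∈ B, ⟪f(p) − f(q), p − q⟫ ≥ H₀ ‖p − q‖². -/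
open scoped RealInnerProductSpace

private lemma gKey (H₀ P₀ m : ℝ) (hH₀ : 0 < H₀) (hP₀ : 0 < P₀) (hm : 1 < m)
    {s r : ℝ} (hs : 0 ≤ s) (hsr : s ≤ r) (hr : r < P₀) :
    H₀ * (r - s) ≤
      (H₀ * P₀ ^ m / (2 * (m - 1))) * ((P₀ - r) ^ (1 - m) - (P₀ + r) ^ (1 - m)) -
      (H₀ * P₀ ^ m / (2 * (m - 1))) * ((P₀ - s) ^ (1 - m) - (P₀ + s) ^ (1 - m)) := by
  set C : ℝ := H₀ * P₀ ^ m / (2 * (m - 1)) with hC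
  have hPm : (0:ℝ) < P₀ ^ m := Real.rpow_pos_of_pos hP₀ m
  have hCpos : 0 < C := div_pos (by positivity) (by linarith)
  set G : ℝ → ℝ := fun x => C * ((P₀ - x) ^ ((1:ℝ) - m) - (P₀ + x) ^ ((1:ℝ) - m)) with hGdef
  -- derivative of G
  have hderiv : ∀ x ∈ Set.Ioo (-P₀) P₀,
      HasDerivAt G (C * ((m - 1) * ((P₀ - x) ^ (-m) + (P₀ + x) ^ (-m)))) x := by
    intro x hx
    have hax : (0:ℝ) < P₀ - x := by linarith [hx.2]
    have hbx : (0:ℝ) < P₀ + x := by linarith [hx.1]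
    have h1 : HasDerivAt (fun y : ℝ => (P₀ - y) ^ ((1:ℝ) - m))
        (((1 - m) * (P₀ - x) ^ ((1 - m) - 1)) * (-1)) x := by
      exact (Real.hasDerivAt_rpow_const (Or.inl hax.ne')).comp x
        ((hasDerivAt_id x).const_sub P₀)
    have h2 : HasDerivAt (fun y : ℝ => (P₀ + y) ^ ((1:ℝ) - m))
        (((1 - m) * (P₀ + x) ^ ((1 - m) - 1)) * 1) x := by
      exact (Real.hasDerivAt_rpow_const (Or.inl hbx.ne')).comp x
        ((hasDerivAt_id x).const_add P₀)
    have h3 := (h1.sub h2).const_mul C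
    have he : (1 - m) - 1 = -m := by ring
    rw [he] at h3
    exact h3.congr_deriv (by ring)
  have hcont : ContinuousOn G (Set.Ioo (-P₀) P₀) := fun x hx =>
    ((hderiv x hx).differentiableAt.continuousAt).continuousWithinAt
  have hdiff : DifferentiableOn ℝ G (interior (Set.Ioo (-P₀) P₀)) := by
    rw [interior_Ioo]
    exact fun x hx => ((hderiv x hx).differentiableAt).differentiableWithinAt
  have hge : ∀ x ∈ interior (Set.Ioo (-P₀) P₀), H₀ ≤ deriv G x := by
    rw [interior_Ioo]
    intro x hx
    rw [(hderiv x hx).deriv]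
    have hax : (0:ℝ) < P₀ - x := by linarith [hx.2]
    have hbx : (0:ℝ) < P₀ + x := by linarith [hx.1]
    set a := P₀ - x
    set b := P₀ + x
    have hu : (0:ℝ) < a ^ (-m) := Real.rpow_pos_of_pos hax _
    have hv : (0:ℝ) < b ^ (-m) := Real.rpow_pos_of_pos hbx _
    have hab : a * b ≤ P₀ ^ (2:ℕ) := by simp only [a, b]; nlinarith [sq_nonneg x]
    have hab0 : (0:ℝ) < a * b := mul_pos hax hbx
    have key2 : (P₀ ^ (2:ℕ)) ^ (-m) ≤ (a * b) ^ (-m) :=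
      Real.rpow_le_rpow_of_nonpos hab0 hab (by linarith)
    have key1 : a ^ (-m) * b ^ (-m) = (a * b) ^ (-m) :=
      (Real.mul_rpow hax.le hbx.le).symm
    -- (P₀^2)^(-m) = (P₀^(-m))^2
    have key3 : (P₀ ^ (2:ℕ)) ^ (-m) = (P₀ ^ (-m)) ^ (2:ℕ) := by
      rw [← Real.rpow_natCast P₀ 2, ← Real.rpow_natCast (P₀ ^ (-m)) 2,
        ← Real.rpow_mul hP₀.le, ← Real.rpow_mul hP₀.le]
      ring_nf
    -- AM-GM : 2 * sqrt(u v) ≤ u + v, and sqrt(uv) ≥ sqrt((P₀^2)^(-m)) = P₀^(-m)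
    have hsq : 2 * Real.sqrt (a ^ (-m) * b ^ (-m)) ≤ a ^ (-m) + b ^ (-m) := by
      rw [Real.sqrt_mul hu.le]
      nlinarith [sq_nonneg (Real.sqrt (a ^ (-m)) - Real.sqrt (b ^ (-m))),
        Real.sq_sqrt hu.le, Real.sq_sqrt hv.le]
    have hPmneg : (0:ℝ) < P₀ ^ (-m) := Real.rpow_pos_of_pos hP₀ _
    have hsq2 : P₀ ^ (-m) ≤ Real.sqrt (a ^ (-m) * b ^ (-m)) := by
      rw [key1]
      calc P₀ ^ (-m) = Real.sqrt ((P₀ ^ (-m)) ^ (2:ℕ)) := (Real.sqrt_sq hPmneg.le).symm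
        _ = Real.sqrt ((P₀ ^ (2:ℕ)) ^ (-m)) := by rw [key3]
        _ ≤ Real.sqrt ((a * b) ^ (-m)) := Real.sqrt_le_sqrt key2
    have hsum : 2 * P₀ ^ (-m) ≤ a ^ (-m) + b ^ (-m) := by nlinarith
    have hcancel : P₀ ^ m * P₀ ^ (-m) = 1 := by
      rw [← Real.rpow_add hP₀]; simp
    have hm1 : m - 1 ≠ 0 := by intro h; rw [sub_eq_zero] at h; linarith
    have hexp : C * (m - 1) = H₀ * P₀ ^ m / 2 := by
      rw [hC]; field_simp
    calc H₀ = H₀ * P₀ ^ m / 2 * (2 * P₀ ^ (-m)) := by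
          field_simp
          nlinarith [hcancel]
      _ ≤ H₀ * P₀ ^ m / 2 * (a ^ (-m) + b ^ (-m)) := by
          apply mul_le_mul_of_nonneg_left hsum (by positivity)
      _ = C * ((m - 1) * (a ^ (-m) + b ^ (-m))) := by rw [← hexp]; ring
  have := (convex_Ioo (-P₀) P₀).mul_sub_le_image_sub_of_le_deriv hcont hdiff hge
    s ⟨by linarith, by linarith⟩ r ⟨by linarith, hr⟩ hsr
  simpa [hGdef] using this

/-- The irreversible operator of the saturating ferroelectric model is strongly
monotone with constant `H₀` on the open ball of radius `P₀`. -/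
theorem saturating_operator_strongly_monotone
    (d : ℕ) (hd : 1 ≤ d) (H₀ P₀ m : ℝ) (hH₀ : 0 < H₀) (hP₀ : 0 < P₀) (hm : 1 < m)
    (g : ℝ → ℝ)
    (hg : ∀ r : ℝ, 0 ≤ r → r < P₀ →
      g r = (H₀ * P₀ ^ m / (2 * (m - 1))) *
        ((P₀ - r) ^ (1 - m) - (P₀ + r) ^ (1 - m)))
    (f : EuclideanSpace ℝ (Fin d) → EuclideanSpace ℝ (Fin d))
    (hf0 : f 0 = 0)
    (hf : ∀ p : EuclideanSpace ℝ (Fin d), p ≠ 0 → ‖p‖ < P₀ → f p = (g ‖p‖ / ‖p‖) • p) :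
    ∀ p q : EuclideanSpace ℝ (Fin d), ‖p‖ < P₀ → ‖q‖ < P₀ →
      H₀ * ‖p - q‖ ^ 2 ≤ ⟪f p - f q, p - q⟫ := by
  -- key scalar facts about g
  have hmono : ∀ s r : ℝ, 0 ≤ s → s ≤ r → r < P₀ → H₀ * (r - s) ≤ g r - g s := by
    intro s r hs hsr hr
    rw [hg r (hs.trans hsr) hr, hg s hs (lt_of_le_of_lt hsr hr)]
    exact gKey H₀ P₀ m hH₀ hP₀ hm hs hsr hr
  have hg0 : g 0 = 0 := by
    rw [hg 0 le_rfl hP₀]; simp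
  have hB : ∀ r : ℝ, 0 ≤ r → r < P₀ → H₀ * r ≤ g r := by
    intro r hr hrP
    have := hmono 0 r le_rfl hr hrP
    rw [hg0] at this; simpa using this
  intro p q hp hq
  by_cases hp0 : p = 0
  · by_cases hq0 : q = 0
    · subst hp0; subst hq0; simp [hf0]
    · subst hp0
      rw [hf0, hf q hq0 hq]
      have hq' : (0:ℝ) < ‖q‖ := norm_pos_iff.mpr hq0
      have hBq := hB ‖q‖ (norm_nonneg q) hq
      rw [zero_sub, zero_sub, inner_neg_neg, real_inner_smul_left,
        real_inner_self_eq_norm_sq, norm_neg]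
      rw [div_mul_eq_mul_div, le_div_iff₀ hq']
      nlinarith
  · by_cases hq0 : q = 0
    · subst hq0
      rw [hf0, hf p hp0 hp]
      have hp' : (0:ℝ) < ‖p‖ := norm_pos_iff.mpr hp0
      have hBp := hB ‖p‖ (norm_nonneg p) hp
      rw [sub_zero, sub_zero, real_inner_smul_left, real_inner_self_eq_norm_sq]
      rw [div_mul_eq_mul_div, le_div_iff₀ hp']
      nlinarith
    · -- the generic case
      have hr0 : (0:ℝ) < ‖p‖ := norm_pos_iff.mpr hp0
      have hs0 : (0:ℝ) < ‖q‖ := norm_pos_iff.mpr hq0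
      set r := ‖p‖ with hrdef
      set s := ‖q‖ with hsdef
      set a := g r / r with hadef
      set b := g s / s with hbdef
      have ga : g r = a * r := by rw [hadef]; field_simp
      have gb : g s = b * s := by rw [hbdef]; field_simp
      set t := ⟪p, q⟫ with htdef
      have habs : |t| ≤ r * s := abs_real_inner_le_norm p q
      obtain ⟨ht1, ht2⟩ := abs_le.mp habs
      have expand : ⟪f p - f q, p - q⟫ = a * r ^ 2 + b * s ^ 2 - t * (a + b) := by
        rw [hf p hp0 hp, hf q hq0 hq]
        simp only [inner_sub_left, inner_sub_right, real_inner_smul_left,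
          real_inner_self_eq_norm_sq, real_inner_comm p q, ← hrdef, ← hsdef, ← htdef]
        ring
      have hnorm : ‖p - q‖ ^ 2 = r ^ 2 - 2 * t + s ^ 2 := by
        rw [norm_sub_sq_real, ← hrdef, ← hsdef, ← htdef]
      rw [expand, hnorm]
      clear_value a b t s r
      -- scalar facts
      have hBr : H₀ ≤ a := by
        have := hB r hr0.le hp
        rw [ga] at this
        exact le_of_mul_le_mul_right (by linarith) hr0
      have hBs : H₀ ≤ b := by
        have := hB s hs0.le hq
        rw [gb] at this
        exact le_of_mul_le_mul_right (by linarith) hs0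
      have hAs : H₀ * (r - s) ^ 2 ≤ (a * r - b * s) * (r - s) := by
        rcases le_total s r with h | h
        · have := hmono s r hs0.le h hp
          rw [ga, gb] at this
          nlinarith
        · have := hmono r s hr0.le h hq
          rw [ga, gb] at this
          nlinarith
      rcases le_total (a + b) (2 * H₀) with hc | hc
      · have h1 : (0:ℝ) ≤ (t + r * s) * (2 * H₀ - (a + b)) :=
          mul_nonneg (by linarith) (by linarith)
        have h2 : (0:ℝ) ≤ (r + s) * ((a - H₀) * r + (b - H₀) * s) :=
          mul_nonneg (by linarith)
            (add_nonneg (mul_nonneg (by linarith) hr0.le) (mul_nonneg (by linarith) hs0.le))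
        linarith [h1, h2]
      · have h1 : (0:ℝ) ≤ (r * s - t) * ((a + b) - 2 * H₀) :=
          mul_nonneg (by linarith) (by linarith)
        linarith [h1, hAs]
end
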